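/- arXiv:math/0611953 — 2 statements merged into one kernel-verified Lean document; each statement's English description precedes it below -/
import Mathlib

section
/- Let S be a commutative ring, I₁, I₂ ideals, and F₁ ∈ I₁, F₂ ∈ I₂ such that {F₁, F₂} is an S-regular sequence. Then there is a short exact sequence of S-modules 0 → S → I₁ ⊕ I₂ → F₂·I₁ + F₁·I₂ → 0, where the first map sends 1 to (F₁, -F₂) and the second map sends (a, b) to F₂·a + F₁·b. -/
/-- The liaison addition short exact sequence
`0 → S → I₁ ⊕ I₂ → F₂·I₁ + F₁·I₂ → 0`, where the first map is
`s ↦ (F₁·s, -F₂·s)` and the second is `(a,b) ↦ F₂·a + F₁·b`,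
given that `{F₁, F₂}` is a regular sequence on `S`.
Exactness is expressed elementwise: injectivity of the first map, exactness
in the middle, and surjectivity onto the liaison addition ideal. -/
theorem liaison_addition_exact_sequence {S : Type*} [CommRing S]
    (I₁ I₂ : Ideal S) (F₁ F₂ : S) (hF₁ : F₁ ∈ I₁) (hF₂ : F₂ ∈ I₂)
    (hreg₁ : ∀ x : S, F₁ * x = 0 → x = 0)
    (hreg₂ : ∀ x : S, F₂ * x ∈ Ideal.span {F₁} → x ∈ Ideal.span {F₁}) :
    (∀ s : S, F₁ * s = 0 ∧ -(F₂ * s) = 0 → s = 0) ∧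
    (∀ a b : S, a ∈ I₁ → b ∈ I₂ → F₂ * a + F₁ * b = 0 →
      ∃ s : S, a = F₁ * s ∧ b = -(F₂ * s)) ∧
    (∀ c : S, c ∈ Ideal.span {F₂} * I₁ + Ideal.span {F₁} * I₂ ↔
      ∃ a b : S, a ∈ I₁ ∧ b ∈ I₂ ∧ c = F₂ * a + F₁ * b) := by
  refine ⟨fun s hs => hreg₁ s hs.1, ?_, ?_⟩
  · intro a b ha hb h
    have hmem : F₂ * a ∈ Ideal.span {F₁} := by
      rw [Ideal.mem_span_singleton]
      exact ⟨-b, by linear_combination h⟩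
    obtain ⟨s, hs⟩ := Ideal.mem_span_singleton.mp (hreg₂ a hmem)
    refine ⟨s, by rw [hs, mul_comm], ?_⟩
    have : F₁ * (b + F₂ * s) = 0 := by rw [hs] at h; ring_nf; linear_combination h
    have := hreg₁ _ this
    linear_combination this
  · intro c
    constructor
    · intro hc
      obtain ⟨u, hu, v, hv, rfl⟩ := Submodule.mem_sup.mp hc
      obtain ⟨a, ha, rfl⟩ := Ideal.mem_span_singleton_mul.mp hu
      obtain ⟨b, hb, rfl⟩ := Ideal.mem_span_singleton_mul.mp hv
      exact ⟨a, b, ha, hb, rfl⟩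
    · rintro ⟨a, b, ha, hb, rfl⟩
      exact Submodule.add_mem _
        (Submodule.mem_sup_left (Ideal.mem_span_singleton_mul.mpr ⟨a, ha, rfl⟩))
        (Submodule.mem_sup_right (Ideal.mem_span_singleton_mul.mpr ⟨b, hb, rfl⟩))
end

section
/- Let R be a commutative ring and let I₁, I₂, I₁', I₂' be ideals with elements B, F ∈ I₁, A, G ∈ I₂ such that (F,B) : I₁ = I₁' and (G,A) : I₂ = I₂'. Then A·I₁' + B·I₂' ⊆ (AF, BG) : (G·I₁ + F·I₂). -/
lemma liaison_key {R : Type*} [CommRing R] (I J : Ideal R) (a b f g : R) :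
    Ideal.span {a} * ((Ideal.span {f, b}).colon I) ≤
      (Ideal.span {a * f, b * g}).colon
        (Ideal.span {g} * I + Ideal.span {f} * J) := by
  rw [Ideal.mul_le]
  intro r hr h hh
  rw [Ideal.mem_span_singleton] at hr
  obtain ⟨c, rfl⟩ := hr
  rw [Submodule.mem_colon] at hh ⊢
  intro p hp
  have main : a * h * p ∈ Ideal.span {a * f, b * g} := by
    obtain ⟨p₁, hp₁, p₂, hp₂, rfl⟩ := Submodule.mem_sup.mp hp
    rw [mul_add]
    refine Ideal.add_mem _ ?_ ?_
    · refine Submodule.mul_induction_on hp₁ ?_ ?_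
      · intro m hm n hn
        rw [Ideal.mem_span_singleton] at hm
        obtain ⟨d, rfl⟩ := hm
        have hfb : h * n ∈ Ideal.span {f, b} := by
          have := hh n hn
          simpa [smul_eq_mul] using this
        rw [Ideal.mem_span_pair] at hfb
        obtain ⟨u, v, huv⟩ := hfb
        have : a * h * (g * d * n) = (g * d * u) * (a * f) + (a * d * v) * (b * g) := by
          have : a * h * (g * d * n) = (g * d) * (a * (h * n)) := by ring
          rw [this, ← huv]; ring
        rw [this]
        exact Ideal.add_mem _
          (Ideal.mul_mem_left _ _ (Ideal.subset_span (Or.inl rfl)))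
          (Ideal.mul_mem_left _ _ (Ideal.subset_span (Or.inr rfl)))
      · intro x y hx hy
        rw [mul_add]
        exact Ideal.add_mem _ hx hy
    · refine Submodule.mul_induction_on hp₂ ?_ ?_
      · intro m hm n hn
        rw [Ideal.mem_span_singleton] at hm
        obtain ⟨d, rfl⟩ := hm
        have : a * h * (f * d * n) = (h * d * n) * (a * f) := by ring
        rw [this]
        exact Ideal.mul_mem_left _ _ (Ideal.subset_span (Or.inl rfl))
      · intro x y hx hy
        rw [mul_add]
        exact Ideal.add_mem _ hx hy
  have : (a * c * h) • p = c * (a * h * p) := by simp [smul_eq_mul]; ring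
  rw [this]
  exact Ideal.mul_mem_left _ _ main

/-- Liaison addition of residual ideals lands in the residual of the liaison
addition:  if `(F,B) : I₁ = I₁'` and `(G,A) : I₂ = I₂'`, with `B, F ∈ I₁` and
`A, G ∈ I₂`, then `A·I₁' + B·I₂' ⊆ (AF, BG) : (G·I₁ + F·I₂)`. -/
theorem liaison_addition_residual_subset {R : Type*} [CommRing R]
    (I₁ I₂ I₁' I₂' : Ideal R) (A B F G : R)
    (hB : B ∈ I₁) (hF : F ∈ I₁) (hA : A ∈ I₂) (hG : G ∈ I₂)
    (h₁ : (Ideal.span {F, B}).colon I₁ = I₁')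
    (h₂ : (Ideal.span {G, A}).colon I₂ = I₂') :
    Ideal.span {A} * I₁' + Ideal.span {B} * I₂' ≤
      (Ideal.span {A * F, B * G}).colon
        (Ideal.span {G} * I₁ + Ideal.span {F} * I₂) := by
  subst h₁ h₂
  apply sup_le
  · exact liaison_key I₁ I₂ A B F G
  · have := liaison_key I₂ I₁ B A G F
    rwa [Set.pair_comm (B * G) (A * F), add_comm (Ideal.span {F} * I₂)] at this
end
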